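/- arXiv:2206.14428 — 5 statements merged into one kernel-verified Lean document; each statement's English description precedes it below -/
import Mathlib

section
/- Let F be a field, n a natural number, and x_0, …, x_n nonzero elements of F, with X = diag(x_0, …, x_n). Then det(P_nᵀ · X + P̂_n) = (x_0 · x_1 ⋯ x_n) · det(Q_n + X⁻¹), where X⁻¹ = diag(1/x_0, …, 1/x_n). -/
open Matrix

/-- The lower triangular Pascal matrix of size `n+1` over a field `F`. -/
def pascalL (F : Type*) [Field F] (n : ℕ) : Matrix (Fin (n+1)) (Fin (n+1)) F :=
  Matrix.of fun i j => (Nat.choose i.val j.val : F)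

/-- The signed Pascal matrix, with entries `(-1)^(i+j) * choose i j` (the inverse of `P_n`). -/
def pascalHat (F : Type*) [Field F] (n : ℕ) : Matrix (Fin (n+1)) (Fin (n+1)) F :=
  Matrix.of fun i j => (-1 : F) ^ (i.val + j.val) * (Nat.choose i.val j.val : F)

/-- The symmetric Pascal matrix, with entries `choose (i+j) j`. -/
def pascalQ (F : Type*) [Field F] (n : ℕ) : Matrix (Fin (n+1)) (Fin (n+1)) F :=
  Matrix.of fun i j => (Nat.choose (i.val + j.val) j.val : F)

/-! Left multiplication by the unimodular matrix `P_n` turns `P_nᵀ X + P̂_n` into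
`Q_n X + 1 = (Q_n + X⁻¹) X`, because `P_n P̂_n = 1` (an alternating binomial sum) and
`P_n P_nᵀ = Q_n` (Vandermonde's identity). -/

open Finset

theorem Finset.sum_range_eq_sum_range_of_eq_zero {M : Type*} [AddCommMonoid M] {f : ℕ → M}
    {m N : ℕ} (hmN : m ≤ N) (hf : ∀ k, m ≤ k → f k = 0) :
    ∑ k ∈ range N, f k = ∑ k ∈ range m, f k :=
  (sum_subset (range_subset_range.2 hmN) fun k _ hk => hf k (by simpa using hk)).symm

theorem Nat.sum_range_choose_mul_choose (i j : ℕ) :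
    ∑ k ∈ range (j + 1), i.choose k * j.choose k = (i + j).choose j := by
  rw [Nat.add_choose_eq, Nat.sum_antidiagonal_eq_sum_range_succ_mk]
  refine sum_congr rfl fun k hk => ?_
  rw [Nat.choose_symm (mem_range_succ_iff.mp hk)]

theorem sum_range_neg_one_pow_mul_choose {R : Type*} [Ring R] (m : ℕ) :
    ∑ k ∈ range (m + 1), (-1 : R) ^ k * m.choose k = if m = 0 then 1 else 0 := by
  simpa using congrArg (Int.cast : ℤ → R) (Int.alternating_sum_range_choose (n := m))

-- `choose i k * choose k j = choose i j * choose (i - j) (k - j)` reduces this to the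
-- alternating sum of a row of Pascal's triangle.
theorem sum_range_neg_one_pow_mul_choose_mul_choose {R : Type*} [Ring R] (i j : ℕ) :
    ∑ k ∈ range (i + 1), (-1 : R) ^ (k + j) * ((i.choose k * k.choose j : ℕ) : R)
      = if i = j then 1 else 0 := by
  rcases lt_or_ge i j with hij | hji
  · rw [if_neg hij.ne]
    refine sum_eq_zero fun k hk => ?_
    rw [Nat.choose_eq_zero_of_lt ((mem_range_succ_iff.mp hk).trans_lt hij)]
    simp
  obtain ⟨m, rfl⟩ := Nat.exists_eq_add_of_le hji
  rw [add_assoc, sum_range_add, sum_eq_zero fun k hk => by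
    rw [Nat.choose_eq_zero_of_lt (mem_range.mp hk)]; simp, zero_add]
  calc ∑ k ∈ range (m + 1),
        (-1 : R) ^ (j + k + j) * (((j + m).choose (j + k) * (j + k).choose j : ℕ) : R)
      = ∑ k ∈ range (m + 1), ((j + m).choose j : R) * ((-1) ^ k * m.choose k) := by
        refine sum_congr rfl fun k _ => ?_
        rw [Nat.choose_mul (Nat.le_add_right j k), Nat.add_sub_cancel_left, Nat.add_sub_cancel_left,
          add_right_comm, pow_add, ← two_mul, pow_mul]
        push_cast
        rw [neg_one_sq, one_pow, one_mul, ← mul_assoc, ← mul_assoc,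
          ((Commute.neg_one_left _).pow_left k).eq]
    _ = if j + m = j then 1 else 0 := by
        rw [← mul_sum, sum_range_neg_one_pow_mul_choose]
        rcases eq_or_ne m 0 with rfl | hm <;> simp [*]

section Pascal

variable (F : Type*) [Field F] (n : ℕ)

theorem pascalL_mul_transpose : pascalL F n * (pascalL F n)ᵀ = pascalQ F n := by
  ext i j
  simp only [mul_apply, transpose_apply, pascalL, pascalQ, of_apply]
  rw [Fin.sum_univ_eq_sum_range (fun k => (i.val.choose k : F) * (j.val.choose k : F)),
    sum_range_eq_sum_range_of_eq_zero j.is_lt fun k hk => by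
      rw [Nat.choose_eq_zero_of_lt (Nat.lt_of_succ_le hk)]; simp,
    ← Nat.sum_range_choose_mul_choose]
  push_cast
  rfl

theorem pascalL_mul_pascalHat : pascalL F n * pascalHat F n = 1 := by
  ext i j
  simp only [mul_apply, pascalL, pascalHat, of_apply, one_apply, Fin.ext_iff]
  rw [Fin.sum_univ_eq_sum_range
      (fun k => (i.val.choose k : F) * ((-1) ^ (k + j.val) * (k.choose j.val : F))),
    sum_range_eq_sum_range_of_eq_zero i.is_lt fun k hk => by
      rw [Nat.choose_eq_zero_of_lt (Nat.lt_of_succ_le hk)]; simp,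
    ← sum_range_neg_one_pow_mul_choose_mul_choose]
  refine sum_congr rfl fun k _ => ?_
  push_cast
  ring

theorem det_pascalL : (pascalL F n).det = 1 := by
  rw [det_of_isLowerTriangular _ fun i j hij => by
    simp [pascalL, Nat.choose_eq_zero_of_lt (show i.val < j.val from hij)]]
  simp [pascalL]

end Pascal

theorem Matrix.add_diagonal_inv_mul_diagonal {ι F : Type*} [Fintype ι] [DecidableEq ι] [Field F]
    (A : Matrix ι ι F) {x : ι → F} (hx : ∀ i, x i ≠ 0) :
    (A + diagonal fun i => (x i)⁻¹) * diagonal x = A * diagonal x + 1 := by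
  rw [add_mul, diagonal_mul_diagonal, ← diagonal_one]
  simp only [inv_mul_cancel₀ (hx _)]

theorem det_pascal_diagonal_params (F : Type*) [Field F] (n : ℕ)
    (x : Fin (n+1) → F) (hx : ∀ i, x i ≠ 0) :
    ((pascalL F n)ᵀ * Matrix.diagonal x + pascalHat F n).det
      = (∏ i, x i) * (pascalQ F n + Matrix.diagonal (fun i => (x i)⁻¹)).det := by
  calc ((pascalL F n)ᵀ * diagonal x + pascalHat F n).det
      = (pascalL F n * ((pascalL F n)ᵀ * diagonal x + pascalHat F n)).det := by
        rw [det_mul, det_pascalL, one_mul]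
    _ = ((pascalQ F n + diagonal fun i => (x i)⁻¹) * diagonal x).det := by
        rw [mul_add, ← mul_assoc, pascalL_mul_transpose, pascalL_mul_pascalHat,
          add_diagonal_inv_mul_diagonal _ hx]
    _ = (∏ i, x i) * (pascalQ F n + diagonal fun i => (x i)⁻¹).det := by
        rw [det_mul, det_diagonal, mul_comm]
end

section
/- Let F be a field, n : ℕ, x, y ∈ F and t ∈ F with t ≠ 0. Let D_t be the diagonal matrix indexed by the vertices (m,j) of the graphene triangle with (D_t)[(m,j),(m,j)] = 1 if j is even and t⁻¹ if j is odd. Then t • (D_t · H_n(x,y) · D_t) = H_n(t·x, t·y). -/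
open Matrix

/-- Vertices of the graphene triangle with rows `0, …, n`: row `m` has `2m+1` atoms. -/
abbrev TriIdx (n : ℕ) := (m : Fin (n+1)) × Fin (2*m.val+1)

/-- The Hückel matrix of the graphene triangle, with row-dependent boundary parameters
`x m`, `y m`. -/
def Huckel (R : Type*) [CommRing R] (n : ℕ) (x y : Fin (n+1) → R) :
    Matrix (TriIdx n) (TriIdx n) R :=
  Matrix.of fun p q =>
    if p.1 = q.1 ∧ (p.2.val + 1 = q.2.val ∨ q.2.val + 1 = p.2.val) then 1
    else if p.1.val + 1 = q.1.val ∧ Even p.2.val ∧ q.2.val = p.2.val + 1 then 1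
    else if q.1.val + 1 = p.1.val ∧ Even q.2.val ∧ p.2.val = q.2.val + 1 then 1
    else if 1 ≤ p.1.val ∧ p.1 = q.1 ∧ p.2.val = 0 ∧ q.2.val = 2*p.1.val then y p.1
    else if 1 ≤ p.1.val ∧ p.1 = q.1 ∧ p.2.val = 2*p.1.val ∧ q.2.val = 0 then x p.1
    else if p.1.val = 0 ∧ q.1.val = 0 then x p.1 + y p.1
    else 0

/-! Every hopping entry of `Huckel` (value `1`) joins an even to an odd position within the
rows, while the boundary parameters `x`, `y` sit only between even positions. Conjugating by
`diag(1, t⁻¹)` and multiplying by `t` therefore fixes the hopping entries and multiplies the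
boundary entries by `t`. -/

section Huckel

variable {R : Type*} [CommRing R] {n : ℕ}

theorem Huckel_apply_eq_zero_of_not_even (x y : Fin (n+1) → R) {p q : TriIdx n}
    (hp : ¬Even p.2.val) (hq : ¬Even q.2.val) : Huckel R n x y p q = 0 := by
  have hp1 := p.2.isLt
  simp only [Nat.not_even_iff_odd, Nat.odd_iff] at hp hq
  simp only [Huckel, of_apply, Nat.even_iff]
  split_ifs <;> first | rfl | omega

theorem Huckel_apply_of_even_iff_not_even (x y x' y' : Fin (n+1) → R) {p q : TriIdx n}
    (hpq : Even p.2.val ↔ ¬Even q.2.val) : Huckel R n x y p q = Huckel R n x' y' p q := by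
  have hp1 := p.2.isLt
  have hq1 := q.2.isLt
  simp only [Nat.even_iff] at hpq
  simp only [Huckel, of_apply, Nat.even_iff]
  split_ifs <;> first | rfl | omega

theorem Huckel_mul_apply_of_even (c : R) (x y : Fin (n+1) → R) {p q : TriIdx n}
    (hp : Even p.2.val) (hq : Even q.2.val) :
    Huckel R n (fun m => c * x m) (fun m => c * y m) p q = c * Huckel R n x y p q := by
  have hp1 := p.2.isLt
  have hq1 := q.2.isLt
  simp only [Nat.even_iff] at hp hq
  simp only [Huckel, of_apply, Nat.even_iff]
  split_ifs <;> first | omega | ring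

end Huckel

theorem Huckel_scaling (F : Type*) [Field F] (n : ℕ) (x y t : F) (ht : t ≠ 0) :
    t • (Matrix.diagonal (fun p : TriIdx n => if Even p.2.val then (1 : F) else t⁻¹) *
          Huckel F n (fun _ => x) (fun _ => y) *
          Matrix.diagonal (fun p : TriIdx n => if Even p.2.val then (1 : F) else t⁻¹))
      = Huckel F n (fun _ => t*x) (fun _ => t*y) := by
  ext p q
  simp only [Matrix.smul_apply, diagonal_mul, mul_diagonal, smul_eq_mul]
  by_cases hp : Even p.2.val <;> by_cases hq : Even q.2.val <;>
    simp only [hp, hq, if_true, if_false]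
  · rw [Huckel_mul_apply_of_even t _ _ hp hq]
    ring
  · rw [Huckel_apply_of_even_iff_not_even _ _ (fun _ => t*x) (fun _ => t*y) (by tauto)]
    field_simp
  · rw [Huckel_apply_of_even_iff_not_even _ _ (fun _ => t*x) (fun _ => t*y) (by tauto)]
    field_simp
  · simp only [Huckel_apply_eq_zero_of_not_even _ _ hp hq, mul_zero, zero_mul]
end

section
/- Let R be a commutative ring, n : ℕ, and x, y, t ∈ R. Then det H_n(t·x, t·y) = t^{n+1} · det H_n(x,y); that is, det H_n(x,y) is a homogeneous polynomial of degree n+1 in x and y. -/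
open Matrix

lemma huckel_mul_diag {R : Type*} [CommRing R] (n : ℕ) (x y t : R) :
    Huckel R n (fun _ => t*x) (fun _ => t*y) *
      Matrix.diagonal (fun p : TriIdx n => if Even p.2.val then (1:R) else t)
    = Matrix.diagonal (fun p : TriIdx n => if Even p.2.val then t else (1:R)) *
      Huckel R n (fun _ => x) (fun _ => y) := by
  ext p q
  rw [Matrix.mul_diagonal, Matrix.diagonal_mul]
  have hp := p.2.isLt
  have hq := q.2.isLt
  simp only [Huckel, Matrix.of_apply]
  split_ifs <;> simp_all [Nat.even_iff]
  all_goals try ring1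
  all_goals try (exfalso; omega)

lemma prod_range_ite_even {R : Type*} [CommRing R] (t : R) (N : ℕ) :
    (∏ j ∈ Finset.range N, if Even j then t else 1) = t ^ ((N+1)/2) := by
  induction N with
  | zero => simp
  | succ N ih =>
    rw [Finset.prod_range_succ, ih]
    rcases Nat.even_or_odd N with h | h
    · rw [if_pos h]
      obtain ⟨k, rfl⟩ := h
      rw [show (k+k+1+1)/2 = (k+k+1)/2 + 1 by omega, pow_succ]
    · rw [if_neg (Nat.not_even_iff_odd.mpr h), mul_one]
      obtain ⟨k, rfl⟩ := h
      congr 1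
      omega

lemma prod_range_ite_odd {R : Type*} [CommRing R] (t : R) (N : ℕ) :
    (∏ j ∈ Finset.range N, if Even j then (1:R) else t) = t ^ (N/2) := by
  induction N with
  | zero => simp
  | succ N ih =>
    rw [Finset.prod_range_succ, ih]
    rcases Nat.even_or_odd N with h | h
    · rw [if_pos h, mul_one]
      obtain ⟨k, rfl⟩ := h
      congr 1
      omega
    · rw [if_neg (Nat.not_even_iff_odd.mpr h)]
      obtain ⟨k, rfl⟩ := h
      rw [show (2*k+1+1)/2 = (2*k+1)/2 + 1 by omega, pow_succ]

lemma det_diag_even {R : Type*} [CommRing R] (n : ℕ) (t : R) :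
    (Matrix.diagonal (fun p : TriIdx n => if Even p.2.val then t else (1:R))).det
      = t ^ (n + 1 + ∑ m : Fin (n+1), m.val) := by
  rw [Matrix.det_diagonal, ← Finset.univ_sigma_univ, Finset.prod_sigma]
  have : ∀ m : Fin (n+1), (∏ j : Fin (2*m.val+1), if Even j.val then t else (1:R))
      = t ^ (m.val + 1) := by
    intro m
    rw [Fin.prod_univ_eq_prod_range (fun j => if Even j then t else (1:R)) (2*m.val+1),
      prod_range_ite_even]
    congr 1
    omega
  simp only [this]
  rw [Finset.prod_pow_eq_pow_sum]
  congr 1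
  rw [Finset.sum_add_distrib]
  simp [add_comm]

lemma det_diag_odd {R : Type*} [CommRing R] (n : ℕ) (t : R) :
    (Matrix.diagonal (fun p : TriIdx n => if Even p.2.val then (1:R) else t)).det
      = t ^ (∑ m : Fin (n+1), m.val) := by
  rw [Matrix.det_diagonal, ← Finset.univ_sigma_univ, Finset.prod_sigma]
  have : ∀ m : Fin (n+1), (∏ j : Fin (2*m.val+1), if Even j.val then (1:R) else t)
      = t ^ m.val := by
    intro m
    rw [Fin.prod_univ_eq_prod_range (fun j => if Even j then (1:R) else t) (2*m.val+1),
      prod_range_ite_odd]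
    congr 1
    omega
  simp only [this]
  rw [Finset.prod_pow_eq_pow_sum]

lemma det_huckel_domain {R : Type*} [CommRing R] [IsDomain R] (n : ℕ) (x y t : R)
    (ht : t ≠ 0) :
    (Huckel R n (fun _ => t*x) (fun _ => t*y)).det
      = t ^ (n+1) * (Huckel R n (fun _ => x) (fun _ => y)).det := by
  have h := congrArg Matrix.det (huckel_mul_diag n x y t)
  rw [Matrix.det_mul, Matrix.det_mul, det_diag_even, det_diag_odd] at h
  apply mul_right_cancel₀ (pow_ne_zero (∑ m : Fin (n+1), m.val) ht)
  rw [h, pow_add]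
  ring

lemma huckel_map {S R : Type*} [CommRing S] [CommRing R] (f : S →+* R) (n : ℕ)
    (x y : Fin (n+1) → S) :
    (Huckel S n x y).map f = Huckel R n (fun m => f (x m)) (fun m => f (y m)) := by
  ext p q
  simp only [Huckel, Matrix.map_apply, Matrix.of_apply, apply_ite f, _root_.map_one, _root_.map_zero, _root_.map_add]

theorem det_Huckel_homogeneous (R : Type*) [CommRing R] (n : ℕ) (x y t : R) :
    (Huckel R n (fun _ => t*x) (fun _ => t*y)).det
      = t ^ (n+1) * (Huckel R n (fun _ => x) (fun _ => y)).det := by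
  have key := det_huckel_domain (R := MvPolynomial (Fin 3) ℤ) n (MvPolynomial.X 0)
      (MvPolynomial.X 1) (MvPolynomial.X 2) (MvPolynomial.X_ne_zero 2)
  have h2 := congrArg (MvPolynomial.eval₂Hom (Int.castRingHom R) ![x, y, t]) key
  rw [_root_.map_mul, map_pow, RingHom.map_det, RingHom.map_det, RingHom.mapMatrix_apply,
    RingHom.mapMatrix_apply, huckel_map, huckel_map] at h2
  simpa using h2
end

section
/- Let R be a commutative ring, n : ℕ, and x, y ∈ R. Then det H_n(x,y) = det H_n(y,x); that is, the determinant of the Hückel matrix of the graphene triangle is a symmetric (palindromic) polynomial in x and y. -/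
open Matrix

/-- Reflection of each row of the triangle: `(m, j) ↦ (m, 2m - j)`. -/
def triRev (n : ℕ) : TriIdx n ≃ TriIdx n where
  toFun p := ⟨p.1, p.2.rev⟩
  invFun p := ⟨p.1, p.2.rev⟩
  left_inv p := by cases p; simp
  right_inv p := by cases p; simp

set_option maxHeartbeats 16000000 in
theorem det_Huckel_symm (R : Type*) [CommRing R] (n : ℕ) (x y : R) :
    (Huckel R n (fun _ => x) (fun _ => y)).det
      = (Huckel R n (fun _ => y) (fun _ => x)).det := by
  have h : Huckel R n (fun _ => y) (fun _ => x)
      = (Huckel R n (fun _ => x) (fun _ => y)).submatrix (triRev n) (triRev n) := by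
    ext ⟨m, j⟩ ⟨m', j'⟩
    have hj := j.isLt
    have hj' := j'.isLt
    simp only [Huckel, triRev, submatrix_apply, of_apply, Equiv.coe_fn_mk,
      Fin.val_rev, Nat.even_iff, Fin.ext_iff]
    split_ifs <;> first | rfl | (exfalso; omega) | ring
  rw [h, Matrix.det_submatrix_equiv_self]
end

section
/- Let R be a commutative ring, n : ℕ, and x ∈ R. Then det H_n(x, 0) = x^{n+1}; in particular, the coefficients of x^{n+1} and y^{n+1} in the homogeneous polynomial det H_n(x,y) are both equal to 1. -/
open Matrix

/-! Rotating every row of the triangle cyclically by one position, `(m, j) ↦ (m, j + 1 mod 2m+1)`,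
is an even permutation, since each row is a cycle of odd length. Permuting the columns of
`H_n(x, 0)` by it puts the entries `1` of the horizontal edges `(m, j) — (m, j+1)` and the entry
`x` at `((m, 2m), (m, 0))` on the diagonal. The permuted matrix is triangular for the order on
atoms comparing the parity of `j`, then `j`, then the row counted from the bottom, so its
determinant is the product `x ^ (n+1)` of its diagonal. Exchanging `x` and `y` transposes `H`. -/

open Equiv

theorem Matrix.BlockTriangular.det_eq_prod_diag_of_injective {m α R : Type*} [Fintype m]
    [DecidableEq m] [CommRing R] [LinearOrder α] {M : Matrix m m R} {b : m → α}
    (hM : M.BlockTriangular b) (hb : Function.Injective b) : M.det = ∏ i, M i i := by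
  let := LinearOrder.lift' b hb
  exact det_of_isUpperTriangular hM

open Fin.NatCast in
theorem finRotate_succ_pow_apply (k t : ℕ) (i : Fin (k + 1)) :
    (finRotate (k + 1) ^ t) i = i + (t : Fin (k + 1)) := by
  induction t with
  | zero => simp
  | succ t ih => rw [pow_succ', Perm.mul_apply, ih, finRotate_apply, Nat.cast_succ, add_assoc]

theorem finRotate_pow_self (n : ℕ) : finRotate n ^ n = 1 := by
  cases n with
  | zero => exact Subsingleton.elim _ _
  | succ k => ext i; simp [finRotate_succ_pow_apply]

theorem finRotate_two_mul_add_one_eq_sq (k : ℕ) :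
    finRotate (2 * k + 1) = (finRotate (2 * k + 1) ^ (k + 1)) ^ 2 := by
  rw [← pow_mul, show (k + 1) * 2 = 2 * k + 1 + 1 by ring, pow_succ, finRotate_pow_self, one_mul]

def rowRotation (n : ℕ) : Perm (TriIdx n) :=
  Perm.sigmaCongrRight fun m => finRotate (2 * m.val + 1)

theorem rowRotation_apply (n : ℕ) (m : Fin (n + 1)) (j : Fin (2 * m.val + 1)) :
    rowRotation n ⟨m, j⟩ = ⟨m, finRotate _ j⟩ :=
  rfl

theorem sign_rowRotation (n : ℕ) : Perm.sign (rowRotation n) = 1 := by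
  have hsq : rowRotation n =
      Perm.sigmaCongrRightHom (fun m : Fin (n + 1) => Fin (2 * m.val + 1))
        (fun m : Fin (n + 1) => finRotate (2 * m.val + 1) ^ (m.val + 1)) ^ 2 := by
    rw [← map_pow]
    exact congrArg (Perm.sigmaCongrRightHom _)
      (funext fun m : Fin (n + 1) => finRotate_two_mul_add_one_eq_sq m.val)
  rw [hsq, map_pow, Int.units_sq]

def huckelWeight (n : ℕ) (p : TriIdx n) : ℕ ×ₗ ℕ ×ₗ ℕ :=
  toLex (p.2.val % 2, toLex (p.2.val, n - p.1.val))

theorem huckelWeight_injective (n : ℕ) : Function.Injective (huckelWeight n) := by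
  rintro ⟨m, j⟩ ⟨m', j'⟩ h
  simp only [huckelWeight, toLex_inj, Prod.mk.injEq] at h
  obtain rfl : m = m' := Fin.ext (by omega)
  simpa [Fin.ext_iff] using h.2.1

section Huckel

variable (R : Type*) [CommRing R] (n : ℕ)

theorem Huckel_transpose (x y : Fin (n + 1) → R) : (Huckel R n x y)ᵀ = Huckel R n y x := by
  ext ⟨m, j⟩ ⟨m', j'⟩
  simp only [Huckel, transpose_apply, of_apply, Fin.ext_iff]
  split_ifs <;> grind

theorem Huckel_apply_rowRotation_self (x : R) (p : TriIdx n) :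
    Huckel R n (fun _ => x) (fun _ => 0) p (rowRotation n p) =
      if p.2 = Fin.last _ then x else 1 := by
  obtain ⟨m, j⟩ := p
  simp only [rowRotation_apply, Huckel, of_apply, coe_finRotate, Fin.ext_iff, Fin.val_last]
  split_ifs <;> grind

theorem Huckel_apply_rowRotation_eq_zero (x : R) {p q : TriIdx n}
    (h : huckelWeight n p < huckelWeight n q) :
    Huckel R n (fun _ => x) (fun _ => 0) p (rowRotation n q) = 0 := by
  obtain ⟨m, j⟩ := p
  obtain ⟨m', j'⟩ := q
  simp only [huckelWeight, Prod.Lex.toLex_lt_toLex] at h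
  simp only [rowRotation_apply, Huckel, of_apply, coe_finRotate, Fin.ext_iff, Fin.val_last,
    Nat.even_iff]
  split_ifs <;> grind

theorem det_Huckel_const_zero (x : R) :
    (Huckel R n (fun _ => x) (fun _ => 0)).det = x ^ (n + 1) := by
  set H := Huckel R n (fun _ => x) (fun _ => 0)
  have hrot : (H.submatrix id (rowRotation n)).det = H.det := by
    rw [det_permute', sign_rowRotation, Units.val_one, Int.cast_one, one_mul]
  have htri : (H.submatrix id (rowRotation n)).BlockTriangular
      (OrderDual.toDual ∘ huckelWeight n) :=
    fun _ _ hlt => Huckel_apply_rowRotation_eq_zero R n x hlt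
  rw [← hrot, htri.det_eq_prod_diag_of_injective
    (OrderDual.toDual.injective.comp (huckelWeight_injective n))]
  simp only [submatrix_apply, id, H, Huckel_apply_rowRotation_self]
  rw [← Finset.univ_sigma_univ, Finset.prod_sigma]
  simp

end Huckel

theorem det_Huckel_y_zero (R : Type*) [CommRing R] (n : ℕ) (x : R) :
    (Huckel R n (fun _ => x) (fun _ => 0)).det = x ^ (n+1) ∧
    (Huckel R n (fun _ => 0) (fun _ => x)).det = x ^ (n+1) := by
  refine ⟨det_Huckel_const_zero R n x, ?_⟩
  rw [← Huckel_transpose, det_transpose, det_Huckel_const_zero]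
end
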